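/- Consider the true latent dynamics x_{k+1} = A x_k + g(x_k, u_k) + ε_k with output y_k = C x_k and the observer x̂_{k+1} = A x̂_k + g(x̂_k, u_k) + K(y_k − C x̂_k) with ŷ_k = C x̂_k, where A is an n × n real matrix, C an m × n real matrix, K an n × m real matrix, g(·, u) is L_g‑Lipschitz in its first argument (uniformly in u) with respect to the Euclidean norm, and ‖ε_k‖₂ ≤ ε_max for all k. If ρ := ‖A − K C‖₂ + L_g < 1, then the output estimation error e_{y,k} = y_k − ŷ_k is uniformly ultimately bounded with limsup_{k → ∞} ‖e_{y,k}‖₂ ≤ ‖C‖₂ · ε_max/(1 − ρ). -/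

import Mathlib

open scoped Matrix.Norms.L2Operator

lemma euclidean_opNorm_le {m n : ℕ} (M : Matrix (Fin m) (Fin n) ℝ)
    (v : EuclideanSpace ℝ (Fin n)) :
    ‖Matrix.toEuclideanLin M v‖ ≤ ‖M‖ * ‖v‖ :=
  ((Matrix.toEuclideanLin (𝕜 := ℝ) (m := Fin m) (n := Fin n)).trans
    LinearMap.toContinuousLinearMap M).le_opNorm v

lemma toEuclideanLin_mul {l m n : ℕ} (M : Matrix (Fin l) (Fin m) ℝ)
    (N : Matrix (Fin m) (Fin n) ℝ) (v : EuclideanSpace ℝ (Fin n)) :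
    Matrix.toEuclideanLin (M * N) v = Matrix.toEuclideanLin M (Matrix.toEuclideanLin N v) := by
  simp [Matrix.toEuclideanLin_apply, Matrix.mulVec_mulVec]

/-- **UUB of the observer output error.** Under the same observer setup, with
`yhat_k = C xhat_k` and `ρ := ‖A - K C‖₂ + L_g < 1`, the output error `e_{y,k} = y_k - yhat_k`
satisfies `limsup_{k → ∞} ‖e_{y,k}‖₂ ≤ ‖C‖₂ · ε_max / (1 - ρ)`. -/
theorem observer_output_error_uub (n m : ℕ) (U : Type*)
    (A : Matrix (Fin n) (Fin n) ℝ) (C : Matrix (Fin m) (Fin n) ℝ)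
    (K : Matrix (Fin n) (Fin m) ℝ)
    (g : EuclideanSpace ℝ (Fin n) → U → EuclideanSpace ℝ (Fin n))
    (Lg εmax : ℝ)
    (hg : ∀ (x xhat : EuclideanSpace ℝ (Fin n)) (u : U), ‖g x u - g xhat u‖ ≤ Lg * ‖x - xhat‖)
    (x xhat ε : ℕ → EuclideanSpace ℝ (Fin n))
    (y yhat : ℕ → EuclideanSpace ℝ (Fin m)) (u : ℕ → U)
    (hε : ∀ k, ‖ε k‖ ≤ εmax)
    (hx : ∀ k, x (k + 1) = Matrix.toEuclideanLin A (x k) + g (x k) (u k) + ε k)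
    (hy : ∀ k, y k = Matrix.toEuclideanLin C (x k))
    (hyhat : ∀ k, yhat k = Matrix.toEuclideanLin C (xhat k))
    (hxhat : ∀ k, xhat (k + 1) =
      Matrix.toEuclideanLin A (xhat k) + g (xhat k) (u k) +
        Matrix.toEuclideanLin K (y k - Matrix.toEuclideanLin C (xhat k)))
    (hρ : ‖A - K * C‖ + Lg < 1) :
    Filter.limsup (fun k => ‖y k - yhat k‖) Filter.atTop ≤
      ‖C‖ * εmax / (1 - (‖A - K * C‖ + Lg)) := by
  set ρ : ℝ := ‖A - K * C‖ + Lg with hρdef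
  have hεmax : 0 ≤ εmax := le_trans (norm_nonneg _) (hε 0)
  have h1ρ : 0 < 1 - ρ := by linarith
  have hRHS : 0 ≤ ‖C‖ * εmax / (1 - ρ) := by positivity
  -- error dynamics
  set e : ℕ → EuclideanSpace ℝ (Fin n) := fun k => x k - xhat k with he
  have hedyn : ∀ k, e (k + 1) =
      Matrix.toEuclideanLin (A - K * C) (e k) + (g (x k) (u k) - g (xhat k) (u k)) + ε k := by
    intro k
    have : Matrix.toEuclideanLin K (y k - Matrix.toEuclideanLin C (xhat k)) =
        Matrix.toEuclideanLin (K * C) (e k) := by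
      rw [hy, toEuclideanLin_mul, he]
      simp [map_sub]
    simp only [he, hx k, hxhat k, this, map_sub, LinearMap.sub_apply]
    abel
  by_cases hρ0 : 0 ≤ ρ
  · -- norm recursion
    have hrec : ∀ k, ‖e (k + 1)‖ ≤ ρ * ‖e k‖ + εmax := by
      intro k
      calc ‖e (k + 1)‖
          ≤ ‖Matrix.toEuclideanLin (A - K * C) (e k)‖ +
              ‖g (x k) (u k) - g (xhat k) (u k)‖ + ‖ε k‖ := by
            rw [hedyn k]
            exact norm_add₃_le
        _ ≤ ‖A - K * C‖ * ‖e k‖ + Lg * ‖e k‖ + εmax := by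
            gcongr
            · exact euclidean_opNorm_le _ _
            · exact hg _ _ _
            · exact hε k
        _ = ρ * ‖e k‖ + εmax := by ring
    -- geometric bound
    have hbound : ∀ k, ‖e k‖ ≤ ρ ^ k * ‖e 0‖ + εmax / (1 - ρ) := by
      intro k
      induction k with
      | zero => simp; positivity
      | succ k ih =>
        have := hrec k
        have key : ρ * (ρ ^ k * ‖e 0‖ + εmax / (1 - ρ)) + εmax
            = ρ ^ (k + 1) * ‖e 0‖ + εmax / (1 - ρ) := by
          field_simp
          ring
        calc ‖e (k + 1)‖ ≤ ρ * ‖e k‖ + εmax := hrec k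
          _ ≤ ρ * (ρ ^ k * ‖e 0‖ + εmax / (1 - ρ)) + εmax := by nlinarith
          _ = ρ ^ (k + 1) * ‖e 0‖ + εmax / (1 - ρ) := key
    have hyb : ∀ k, ‖y k - yhat k‖ ≤ ‖C‖ * (ρ ^ k * ‖e 0‖ + εmax / (1 - ρ)) := by
      intro k
      have : y k - yhat k = Matrix.toEuclideanLin C (e k) := by
        rw [hy, hyhat, he, map_sub]
      rw [this]
      calc ‖Matrix.toEuclideanLin C (e k)‖ ≤ ‖C‖ * ‖e k‖ := euclidean_opNorm_le _ _
        _ ≤ ‖C‖ * (ρ ^ k * ‖e 0‖ + εmax / (1 - ρ)) := by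
            have := hbound k
            have hC : (0:ℝ) ≤ ‖C‖ := norm_nonneg _
            nlinarith
    -- limit of the bounding sequence
    have htend : Filter.Tendsto (fun k => ‖C‖ * (ρ ^ k * ‖e 0‖ + εmax / (1 - ρ)))
        Filter.atTop (nhds (‖C‖ * (0 * ‖e 0‖ + εmax / (1 - ρ)))) := by
      apply Filter.Tendsto.const_mul
      apply Filter.Tendsto.add_const
      apply Filter.Tendsto.mul_const
      exact tendsto_pow_atTop_nhds_zero_of_lt_one hρ0 (by linarith)
    have hle : Filter.limsup (fun k => ‖y k - yhat k‖) Filter.atTop ≤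
        Filter.limsup (fun k => ‖C‖ * (ρ ^ k * ‖e 0‖ + εmax / (1 - ρ))) Filter.atTop := by
      exact Filter.limsup_le_limsup (Filter.Eventually.of_forall hyb)
        (Filter.isCoboundedUnder_le_of_le _ fun k => norm_nonneg _)
        htend.isBoundedUnder_le
    rw [htend.limsup_eq] at hle
    calc Filter.limsup (fun k => ‖y k - yhat k‖) Filter.atTop
        ≤ ‖C‖ * (0 * ‖e 0‖ + εmax / (1 - ρ)) := hle
      _ = ‖C‖ * εmax / (1 - ρ) := by ring
  · -- ρ < 0 forces Lg < 0, hence n = 0 effectively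
    push_neg at hρ0
    have hLg : Lg < 0 := by
      have : (0:ℝ) ≤ ‖A - K * C‖ := norm_nonneg _
      linarith
    -- show e k = 0 for all k, since any nonzero vector gives a contradiction
    have hzero : ∀ v w : EuclideanSpace ℝ (Fin n), v = w := by
      intro v w
      by_contra hvw
      have hnorm : 0 < ‖v - w‖ := by
        rw [norm_pos_iff, sub_ne_zero]; exact hvw
      have := hg v w (u 0)
      nlinarith [norm_nonneg (g v (u 0) - g w (u 0))]
    have hy0 : ∀ k, (fun k => ‖y k - yhat k‖) k = 0 := by
      intro k
      show ‖y k - yhat k‖ = 0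
      rw [hy, hyhat, hzero (x k) (xhat k), sub_self, norm_zero]
    have : Filter.limsup (fun k => ‖y k - yhat k‖) Filter.atTop = 0 := by
      have : (fun k => ‖y k - yhat k‖) = fun _ => (0:ℝ) := funext hy0
      rw [this, Filter.limsup_const]
    rw [this]
    exact hRHS
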